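/- arXiv:1711.04935 — 7 statements merged into one kernel-verified Lean document; each statement's English description precedes it below -/
import Mathlib

section
/- Let N be an unrooted nonbinary phylogenetic network on leaf set X. Then N is tree-based (i.e., N has a spanning tree T with leaf set exactly X such that T contains every edge of N joining two vertices of degree at least 4, and every vertex of degree 2 in T has degree 3 in N) if and only if N can be obtained from some tree T' by subdividing edges of T' to create attachment points and adding new edges, each new edge joining either two attachment points or an attachment point and an original vertex of T', such that each attachment point has degree exactly 3 in N. -/
open SimpleGraph

variable {V : Type*}

/-- The degree of a vertex. -/
noncomputable def deg (G : SimpleGraph V) (v : V) : ℕ := (G.neighborSet v).ncard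

/-- The leaves (degree-1 vertices) of a graph. -/
def leaves (G : SimpleGraph V) : Set V := {v | deg G v = 1}

/-- An (unrooted, nonbinary) phylogenetic network on leaf set `X`:
a connected graph with no degree-2 vertices whose leaf set is exactly `X`. -/
def IsPhyloNetwork (G : SimpleGraph V) (X : Set V) : Prop :=
  G.Connected ∧ (∀ v, deg G v ≠ 2) ∧ leaves G = X

/-- `T` is a spanning tree of `N` with leaf set exactly `X`. -/
def IsBaseTree (N T : SimpleGraph V) (X : Set V) : Prop :=
  T ≤ N ∧ T.IsTree ∧ leaves T = X

/-- Loosely tree-based: some spanning tree of `N` has leaf set exactly `X`. -/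
def LooselyTreeBased (N : SimpleGraph V) (X : Set V) : Prop :=
  ∃ T, IsBaseTree N T X

/-- Tree-based (spanning tree form): some spanning tree `T` with leaf set `X` contains
every edge of `N` joining two vertices of degree at least 4, and every degree-2 vertex
of `T` has degree 3 in `N`. -/
def TreeBased (N : SimpleGraph V) (X : Set V) : Prop :=
  ∃ T, IsBaseTree N T X ∧
    (∀ v w, N.Adj v w → 4 ≤ deg N v → 4 ≤ deg N w → T.Adj v w) ∧
    (∀ v, deg T v = 2 → deg N v = 3)

/-- Strictly tree-based (spanning tree form): some spanning tree `T` with leaf set `X`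
contains every edge of `N` incident to a vertex of degree at least 4. -/
def StrictlyTreeBased (N : SimpleGraph V) (X : Set V) : Prop :=
  ∃ T, IsBaseTree N T X ∧ (∀ v w, N.Adj v w → 4 ≤ deg N v → T.Adj v w)

/-- Tree-based (construction form): `N` is obtained from a tree by subdividing edges
(creating attachment points, i.e. the degree-2 vertices of the subdivided tree `T`)
and adding new edges, each new edge joining two attachment points or an attachment
point and an original vertex, with every attachment point of degree exactly 3 in `N`. -/
def TreeBasedConstr (N : SimpleGraph V) (X : Set V) : Prop :=
  ∃ T, IsBaseTree N T X ∧
    (∀ v w, N.Adj v w → ¬ T.Adj v w → deg T v = 2 ∨ deg T w = 2) ∧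
    (∀ v, deg T v = 2 → deg N v = 3)

/-- Strictly tree-based (construction form): as in `TreeBasedConstr`, but every new
edge joins two attachment points. -/
def StrictlyTreeBasedConstr (N : SimpleGraph V) (X : Set V) : Prop :=
  ∃ T, IsBaseTree N T X ∧
    (∀ v w, N.Adj v w → ¬ T.Adj v w → deg T v = 2 ∧ deg T w = 2) ∧
    (∀ v, deg T v = 2 → deg N v = 3)

lemma key_deg_two [Fintype V] {N T : SimpleGraph V} {X : Set V}
    (hN : IsPhyloNetwork N X) (hT : IsBaseTree N T X) {v w : V}
    (hvw : N.Adj v w) (hnT : ¬ T.Adj v w) (hle : deg N v ≤ 3) : deg T v = 2 := by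
  obtain ⟨hle', hTree, hleafT⟩ := hT
  obtain ⟨-, hno2, hleafN⟩ := hN
  -- T-neighbors of v are among N-neighbors of v other than w
  have hsub : T.neighborSet v ⊆ N.neighborSet v \ {w} := by
    intro x hx
    refine ⟨hle' hx, ?_⟩
    rintro rfl
    exact hnT hx
  have hupper : deg T v ≤ deg N v - 1 := by
    have h1 : deg T v ≤ (N.neighborSet v \ {w}).ncard :=
      Set.ncard_le_ncard hsub (Set.toFinite _)
    have h2 : (N.neighborSet v \ {w}).ncard = deg N v - 1 :=
      Set.ncard_diff_singleton_of_mem hvw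
    omega
  -- v has a T-neighbor since T is connected and v ≠ w
  have hpos : 1 ≤ deg T v := by
    obtain ⟨p⟩ := hTree.isConnected v w
    cases p with
    | nil => exact absurd rfl hvw.ne
    | cons h _ =>
      have : (T.neighborSet v).Nonempty := ⟨_, h⟩
      exact (Set.ncard_pos (Set.toFinite _)).2 this
  have hv2 : deg N v ≠ 2 := hno2 v
  have hNv3 : deg N v = 3 := by omega
  have hne1 : deg T v ≠ 1 := by
    intro h1
    have hvX : v ∈ X := hleafT ▸ h1
    have : v ∈ leaves N := hleafN.symm ▸ hvX
    have : deg N v = 1 := this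
    omega
  omega

theorem tree_based_iff_constr [Fintype V] (N : SimpleGraph V) (X : Set V)
    (hN : IsPhyloNetwork N X) : TreeBased N X ↔ TreeBasedConstr N X := by
  constructor
  · rintro ⟨T, hT, h1, h2⟩
    refine ⟨T, hT, ?_, h2⟩
    intro v w hvw hnT
    rcases le_or_gt (deg N v) 3 with h | h
    · exact Or.inl (key_deg_two hN hT hvw hnT h)
    · rcases le_or_gt (deg N w) 3 with h' | h'
      · exact Or.inr (key_deg_two hN hT hvw.symm (fun a => hnT a.symm) h')
      · exact absurd (h1 v w hvw h h') hnT
  · rintro ⟨T, hT, h1, h2⟩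
    refine ⟨T, hT, ?_, h2⟩
    intro v w hvw h4v h4w
    by_contra hnT
    rcases h1 v w hvw hnT with h | h <;> have := h2 _ h <;> omega
end

section
/- Let N be an unrooted nonbinary phylogenetic network on leaf set X. Then N is strictly tree-based (i.e., N has a spanning tree T with leaf set exactly X such that T contains every edge of N incident to a vertex of degree at least 4) if and only if N can be obtained from some tree T' by subdividing edges of T' to create attachment points and adding new edges, each new edge joining two attachment points, such that each attachment point has degree exactly 3 in N. -/
open SimpleGraph

variable {V : Type*}

lemma deg_mono [Fintype V] {T N : SimpleGraph V} (h : T ≤ N) (v : V) :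
    deg T v ≤ deg N v :=
  Set.ncard_le_ncard (fun _ hw => h hw) (Set.toFinite _)

lemma deg_pos_of_connected [Fintype V] {T : SimpleGraph V} (hc : T.Connected)
    {v w : V} (hvw : v ≠ w) : 1 ≤ deg T v := by
  obtain ⟨p⟩ := hc v w
  cases p with
  | nil => exact absurd rfl hvw
  | cons h q =>
    exact (Set.ncard_pos (Set.toFinite _)).2 ⟨_, h⟩

lemma key_claim [Fintype V] {N T : SimpleGraph V} {X : Set V}
    (hN : IsPhyloNetwork N X) (hle : T ≤ N) (htree : T.IsTree) (hlv : leaves T = X)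
    (hS : ∀ v w, N.Adj v w → 4 ≤ deg N v → T.Adj v w) :
    (∀ v, deg T v = 2 → deg N v = 3) ∧
    (∀ v w, N.Adj v w → ¬ T.Adj v w → deg T v = 2) := by
  obtain ⟨hconn, hno2, hlvN⟩ := hN
  constructor
  · intro v hv
    have h1 : deg N v ≠ 1 := by
      intro h
      have : v ∈ leaves N := h
      rw [hlvN, ← hlv] at this
      have h' : deg T v = 1 := this
      omega
    have h0 : deg N v ≠ 0 := by
      intro h
      have := deg_mono hle v
      omega
    have h4 : ¬ 4 ≤ deg N v := by
      intro h
      -- then all N-neighbors of v are T-neighbors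
      have hsub : N.neighborSet v ⊆ T.neighborSet v := fun w hw => hS v w hw h
      have : deg N v ≤ deg T v := Set.ncard_le_ncard hsub (Set.toFinite _)
      omega
    have := hno2 v
    omega
  · intro v w hvw hTvw
    have hvne : v ≠ w := hvw.ne
    have h4 : ¬ 4 ≤ deg N v := fun h => hTvw (hS v w hvw h)
    have h0 : deg N v ≠ 0 := by
      intro h
      have : w ∈ N.neighborSet v := hvw
      have := (Set.ncard_pos (Set.toFinite _)).2 ⟨w, this⟩
      simp only [deg] at h
      omega
    have h1 : deg N v ≠ 1 := by
      intro h
      -- then N.neighborSet v = {w}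
      have hw : w ∈ N.neighborSet v := hvw
      have heq : N.neighborSet v = {w} := by
        apply Set.eq_singleton_iff_unique_mem.2 ⟨hw, ?_⟩
        intro u hu
        by_contra hne
        have : ({u, w} : Set V) ⊆ N.neighborSet v := by
          intro x hx
          rcases hx with hx | hx
          · exact hx ▸ hu
          · exact hx ▸ hw
        have h2 : ({u, w} : Set V).ncard = 2 := Set.ncard_pair hne
        have := Set.ncard_le_ncard this (Set.toFinite _)
        simp only [deg] at h
        omega
      -- T-neighbors of v ⊆ {w}, but w not a T-neighbor, so deg T v = 0
      have hsub : T.neighborSet v ⊆ (∅ : Set V) := by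
        intro u hu
        have hu' : u ∈ N.neighborSet v := hle hu
        rw [heq, Set.mem_singleton_iff] at hu'
        subst hu'
        exact absurd hu hTvw
      have hT0 : deg T v = 0 := by
        simp only [deg]
        rw [Set.subset_empty_iff.1 hsub]
        simp
      -- but v ∈ X since deg N v = 1, so deg T v = 1
      have : v ∈ leaves N := h
      rw [hlvN, ← hlv] at this
      have h' : deg T v = 1 := this
      omega
    have h2 := hno2 v
    have h3 : deg N v = 3 := by omega
    -- T.neighborSet v ⊆ N.neighborSet v \ {w}
    have hsub : T.neighborSet v ⊆ N.neighborSet v \ {w} := by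
      intro u hu
      refine ⟨hle hu, ?_⟩
      simp only [Set.mem_singleton_iff]
      rintro rfl
      exact hTvw hu
    have hwmem : w ∈ N.neighborSet v := hvw
    have hdiff : (N.neighborSet v \ {w}).ncard = 2 := by
      rw [Set.ncard_diff_singleton_of_mem hwmem]
      simp only [deg] at h3
      omega
    have hle2 : deg T v ≤ 2 := hdiff ▸ Set.ncard_le_ncard hsub (Set.toFinite _)
    have hge1 : 1 ≤ deg T v := deg_pos_of_connected htree.isConnected hvne
    have hne1 : deg T v ≠ 1 := by
      intro h
      have : v ∈ leaves T := h
      rw [hlv, ← hlvN] at this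
      have h' : deg N v = 1 := this
      omega
    omega

theorem strictly_tree_based_iff_constr [Fintype V] (N : SimpleGraph V) (X : Set V)
    (hN : IsPhyloNetwork N X) : StrictlyTreeBased N X ↔ StrictlyTreeBasedConstr N X := by
  constructor
  · rintro ⟨T, ⟨hle, htree, hlv⟩, hS⟩
    obtain ⟨hA, hB⟩ := key_claim hN hle htree hlv hS
    exact ⟨T, ⟨hle, htree, hlv⟩,
      fun v w hvw hT => ⟨hB v w hvw hT, hB w v hvw.symm (fun h => hT h.symm)⟩, hA⟩
  · rintro ⟨T, hbase, hnew, hatt⟩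
    refine ⟨T, hbase, fun v w hvw h4 => ?_⟩
    by_contra hT
    have := hatt v (hnew v w hvw hT).1
    omega
end

section
/- If a phylogenetic network N contains a cycle in which no two adjacent vertices both have degree 3 in N, then N is not strictly tree-based. -/
open SimpleGraph

variable {V : Type*}

lemma two_le_deg_of_cycle {G : SimpleGraph V} [Fintype V] {v u : V} (p : G.Walk v v)
    (hp : p.IsCycle) (hu : u ∈ p.support) : 2 ≤ deg G u := by
  classical
  have hq : (p.rotate u hu).IsCycle := hp.rotate hu
  set q := p.rotate u hu with hqdef
  clear_value q
  cases q with
  | nil => exact absurd rfl hq.ne_nil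
  | @cons _ x _ h q' =>
    have hlen3 := hq.three_le_length
    simp only [Walk.length_cons] at hlen3
    rw [Walk.cons_isCycle_iff] at hq
    have hnil : ¬ q'.reverse.Nil := by
      rw [Walk.nil_iff_length_eq, Walk.length_reverse]
      omega
    obtain ⟨b, hb, r, hr⟩ := (Walk.not_nil_iff).mp hnil
    have hbe : s(u, b) ∈ q'.edges := by
      have : s(u, b) ∈ q'.reverse.edges := by rw [hr]; simp
      rwa [Walk.edges_reverse, List.mem_reverse] at this
    have hne : x ≠ b := by
      rintro rfl
      exact hq.2 (by simpa [Sym2.eq_swap] using hbe)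
    have hsub : ({x, b} : Set V) ⊆ G.neighborSet u := by
      rintro y (rfl | rfl)
      · exact h
      · exact hb
    calc 2 = ({x, b} : Set V).ncard := (Set.ncard_pair hne).symm
      _ ≤ deg G u := Set.ncard_le_ncard hsub (Set.toFinite _)

theorem cycle_without_adjacent_degree_three_not_strictly_tree_based [Fintype V]
    (N : SimpleGraph V) (X : Set V) (hN : IsPhyloNetwork N X)
    (v : V) (p : N.Walk v v) (hp : p.IsCycle)
    (hdeg : ∀ u w : V, s(u, w) ∈ p.edges → ¬ (deg N u = 3 ∧ deg N w = 3)) :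
    ¬ StrictlyTreeBased N X := by
  rintro ⟨T, ⟨hTle, hTtree, -⟩, hstrict⟩
  have hedges : ∀ e ∈ p.edges, e ∈ T.edgeSet := by
    intro e he
    induction e with
    | h a b =>
      have hadj : N.Adj a b := p.adj_of_mem_edges he
      have ha3 : 3 ≤ deg N a := by
        have h2 := two_le_deg_of_cycle p hp (p.fst_mem_support_of_mem_edges he)
        have := hN.2.1 a
        omega
      have hb3 : 3 ≤ deg N b := by
        have h2 := two_le_deg_of_cycle p hp (p.snd_mem_support_of_mem_edges he)
        have := hN.2.1 b
        omega
      have h4 : 4 ≤ deg N a ∨ 4 ≤ deg N b := by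
        have := hdeg a b he
        omega
      rcases h4 with h4 | h4
      · exact (hstrict a b hadj h4).symm.symm
      · exact (hstrict b a hadj.symm h4).symm
  exact hTtree.IsAcyclic _ (hp.transfer hedges)
end

section
/- If N is a loosely tree-based phylogenetic network on X, then there is a path in N between any two leaves, and in particular there exists a Hamiltonian-path-free obstruction criterion: if no spanning tree of N has leaf set exactly X, then N is not loosely tree-based. Concretely: a phylogenetic network on a two-element leaf set {a,b} is loosely tree-based if and only if N contains a Hamiltonian path from a to b. -/
open SimpleGraph

variable {V : Type*}

lemma aux_endpoint {G : SimpleGraph V} {u v : V} (p : G.Walk u v) (hp : p.IsPath)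
    (hn : ¬ p.Nil) : p.toSubgraph.neighborSet u = {p.getVert 1} := by
  cases p with
  | nil => simp at hn
  | @cons _ x _ h q =>
    obtain ⟨hq, hu⟩ := (Walk.cons_isPath_iff _ _).mp hp
    have hq0 : q.toSubgraph.neighborSet u = ∅ := by
      ext y
      simp only [Set.mem_empty_iff_false, iff_false, Subgraph.mem_neighborSet]
      intro hA
      exact hu ((Walk.mem_verts_toSubgraph q).mp hA.fst_mem)
    have hsup : (Walk.cons h q).toSubgraph.neighborSet u
        = (G.subgraphOfAdj h).neighborSet u ∪ q.toSubgraph.neighborSet u :=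
      Subgraph.neighborSet_sup _
    rw [hsup, hq0, Set.union_empty, neighborSet_fst_subgraphOfAdj]
    simp [Walk.getVert_cons_succ, Walk.getVert_zero]

lemma aux_internal {G : SimpleGraph V} :
    ∀ {u v : V} (p : G.Walk u v), p.IsPath → ∀ {w : V},
    w ∈ p.support → w ≠ u → w ≠ v →
    ∃ s t : V, s ≠ t ∧ s ∈ p.support ∧ t ∈ p.support ∧
      p.toSubgraph.neighborSet w = {s, t} := by
  intro u v p
  induction p with
  | nil => intro _ w hw hwu _; simp at hw; exact absurd hw hwu
  | @cons a x c h q ih =>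
    intro hp w hw hwu hwv
    obtain ⟨hq, ha⟩ := (Walk.cons_isPath_iff _ _).mp hp
    have hwq : w ∈ q.support := by
      rcases (by simpa [Walk.support_cons] using hw : w = a ∨ w ∈ q.support) with h1 | h1
      · exact absurd h1 hwu
      · exact h1
    have hsup : (Walk.cons h q).toSubgraph.neighborSet w
        = (G.subgraphOfAdj h).neighborSet w ∪ q.toSubgraph.neighborSet w :=
      Subgraph.neighborSet_sup _
    by_cases hwx : w = x
    · subst hwx
      have hnn : ¬ q.Nil := fun h0 => hwv h0.eq
      have hlen := Walk.not_nil_iff_lt_length.mp hnn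
      have hend := aux_endpoint q hq hnn
      have hg1 : q.getVert 1 ∈ q.support :=
        Walk.mem_support_iff_exists_getVert.mpr ⟨1, rfl, by omega⟩
      refine ⟨a, q.getVert 1, ?_, Walk.start_mem_support _,
        by simp [Walk.support_cons, hg1], ?_⟩
      · intro he; rw [he] at ha; exact ha hg1
      · rw [hsup, hend, neighborSet_snd_subgraphOfAdj, Set.singleton_union]
    · obtain ⟨s, t, hst, hs, ht, hset⟩ := ih hq hwq hwx hwv
      refine ⟨s, t, hst, by simp [Walk.support_cons, hs],
        by simp [Walk.support_cons, ht], ?_⟩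
      rw [hsup, neighborSet_subgraphOfAdj_of_ne_of_ne h hwu hwx, Set.empty_union, hset]



lemma no_cycle_of_unique_nbr {T : SimpleGraph V} {u x : V}
    (hx : ∀ w, T.Adj u w → w = x) (c : T.Walk u u) (hc : c.IsCycle) : False := by
  cases c with
  | nil => exact hc.ne_nil rfl
  | @cons _ y _ h q =>
    have hy : y = x := hx _ h
    obtain ⟨hq, he⟩ := (Walk.cons_isCycle_iff _ _).mp hc
    obtain ⟨z, r, h', heq⟩ := Walk.exists_cons_eq_concat h q
    have hz : z = y := (hx _ h'.symm).trans hy.symm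
    have hedges : s(u, y) :: q.edges = r.edges ++ [s(y, u)] := by
      have h0 := congrArg Walk.edges heq
      rw [Walk.edges_cons, Walk.edges_concat, List.concat_eq_append] at h0
      have hzz : s(z, u) = s(y, u) := by rw [hz]
      rwa [hzz] at h0
    have h3 := hc.three_le_length
    rw [Walk.length_cons] at h3
    have hql : q.edges.length = q.length := Walk.length_edges q
    cases hre : r.edges with
    | nil =>
      rw [hre] at hedges
      simp only [List.nil_append] at hedges
      have := congrArg List.length hedges
      simp only [List.length_cons, List.length_singleton, List.length_nil] at this
      omega
    | cons e0 es =>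
      rw [hre] at hedges
      have hq' : q.edges = es ++ [s(y, u)] := by
        have := congrArg List.tail hedges
        simpa using this
      apply he
      rw [hq']
      simp [Sym2.eq_swap]

lemma toSubgraph_spanningCoe_acyclic [DecidableEq V] {G : SimpleGraph V} :
    ∀ {u v : V} (p : G.Walk u v), p.IsPath → p.toSubgraph.spanningCoe.IsAcyclic := by
  intro u v p
  induction p with
  | nil =>
    intro _ w c hc
    apply hc.ne_bot
    ext s t
    simp [Walk.toSubgraph, Subgraph.spanningCoe_adj, singletonSubgraph_adj]
  | @cons a x c h q ih =>
    intro hp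
    obtain ⟨hq, ha⟩ := (Walk.cons_isPath_iff _ _).mp hp
    intro w c hc
    by_cases hus : a ∈ c.support
    · refine no_cycle_of_unique_nbr (x := x) ?_ (c.rotate a hus) (hc.rotate hus)
      intro w' hw'
      simp only [Subgraph.spanningCoe_adj, Walk.toSubgraph, Subgraph.sup_adj,
        subgraphOfAdj_adj, Sym2.eq, Sym2.rel_iff', Prod.mk.injEq, Prod.swap_prod_mk] at hw'
      rcases hw' with (⟨-, hw'⟩ | ⟨-, hw'⟩) | hw'
      · exact hw'.symm
      · exact absurd hw'.symm h.ne
      · exact absurd ((Walk.mem_verts_toSubgraph q).mp hw'.fst_mem) ha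
    · have hsub : ∀ e ∈ c.edges, e ∈ q.toSubgraph.spanningCoe.edgeSet := by
        intro e he
        induction e with
        | h s t =>
          have h1 : (Walk.cons h q).toSubgraph.spanningCoe.Adj s t := c.edges_subset_edgeSet he
          have hs : s ∈ c.support := c.fst_mem_support_of_mem_edges he
          have ht : t ∈ c.support := c.snd_mem_support_of_mem_edges he
          simp only [Subgraph.spanningCoe_adj, Walk.toSubgraph, Subgraph.sup_adj,
            subgraphOfAdj_adj, Sym2.eq, Sym2.rel_iff', Prod.mk.injEq, Prod.swap_prod_mk] at h1
          rcases h1 with (⟨h1, -⟩ | ⟨h1, -⟩) | h1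
          · exact absurd h1 (by rintro rfl; exact hus hs)
          · exact absurd h1 (by rintro rfl; exact hus ht)
          · exact h1
      exact ih hq (c.transfer _ hsub) (hc.transfer hsub)

lemma spanningCoe_neighborSet {G : SimpleGraph V} (H : G.Subgraph) (v : V) :
    H.spanningCoe.neighborSet v = H.neighborSet v := rfl

lemma deg_eq_degree [Fintype V] (G : SimpleGraph V) [DecidableRel G.Adj] (v : V) :
    deg G v = G.degree v := by
  rw [deg, Set.ncard_eq_toFinset_card', Set.toFinset_card, card_neighborSet_eq_degree]

-- Hamiltonian path gives base tree
lemma ham_to_tree [Fintype V] [DecidableEq V] (N : SimpleGraph V) (a b : V) (hab : a ≠ b)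
    (p : N.Walk a b) (hp : p.IsHamiltonian) : IsBaseTree N p.toSubgraph.spanningCoe {a, b} := by
  have hP : p.IsPath := hp.isPath
  have hnn : ¬ p.Nil := Walk.not_nil_of_ne hab
  have hspan : p.toSubgraph.IsSpanning := by
    intro v
    rw [Walk.mem_verts_toSubgraph]
    exact hp.mem_support v
  refine ⟨Subgraph.spanningCoe_le _, ⟨?_, ?_⟩, ?_⟩
  · -- connected
    have hc : p.toSubgraph.Connected := p.toSubgraph_connected
    exact (Subgraph.spanningCoeEquivCoeOfSpanning _ hspan).symm.connected_iff.mp hc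
  · exact toSubgraph_spanningCoe_acyclic p hP
  · -- leaves
    ext v
    simp only [leaves, Set.mem_setOf_eq, Set.mem_insert_iff, Set.mem_singleton_iff]
    have hdeg : deg p.toSubgraph.spanningCoe v = (p.toSubgraph.neighborSet v).ncard := by
      rw [deg, spanningCoe_neighborSet]
    constructor
    · intro h1
      by_contra hcon
      push_neg at hcon
      obtain ⟨hva, hvb⟩ := hcon
      obtain ⟨s, t, hst, -, -, hset⟩ := aux_internal p hP (hp.mem_support v) hva hvb
      rw [hdeg, hset, Set.ncard_pair hst] at h1
      omega
    · rintro (rfl | rfl)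
      · rw [hdeg, aux_endpoint p hP hnn, Set.ncard_singleton]
      · have hnn' : ¬ p.reverse.Nil := Walk.not_nil_of_ne hab.symm
        have := aux_endpoint p.reverse hP.reverse hnn'
        rw [Walk.toSubgraph_reverse] at this
        rw [hdeg, this, Set.ncard_singleton]

lemma first_crossing {T : SimpleGraph V} {S : Set V} :
    ∀ {y t : V}, T.Walk y t → t ∈ S → y ∉ S →
    ∃ z s, z ∉ S ∧ s ∈ S ∧ T.Adj z s := by
  intro y t q
  induction q with
  | nil => intro ht hy; exact absurd ht hy
  | @cons y' m t' hadj r ih =>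
    intro ht hy
    by_cases hm : m ∈ S
    · exact ⟨y', m, hy, hm, hadj⟩
    · exact ih ht hm

lemma tree_to_ham [Fintype V] [DecidableEq V] {N T : SimpleGraph V} {a b : V} (hab : a ≠ b)
    (hBT : IsBaseTree N T {a, b}) : ∃ p : N.Walk a b, p.IsHamiltonian := by
  classical
  obtain ⟨hle, hTree, hleaves⟩ := hBT
  have hconn := hTree.isConnected
  have hda : deg T a = 1 := by
    have : a ∈ leaves T := by rw [hleaves]; exact Set.mem_insert _ _
    exact this
  have hdb : deg T b = 1 := by
    have : b ∈ leaves T := by rw [hleaves]; exact Set.mem_insert_of_mem _ rfl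
    exact this
  have hcard2 : 2 ≤ Fintype.card V := Fintype.one_lt_card_iff_nontrivial.mpr ⟨⟨a, b, hab⟩⟩
  have hpos : ∀ v : V, 1 ≤ deg T v := by
    intro v
    obtain ⟨t, ht⟩ : ∃ t, t ≠ v := by
      rcases eq_or_ne v a with rfl | h
      · exact ⟨b, hab.symm⟩
      · exact ⟨a, fun hh => h hh.symm⟩
    obtain ⟨q⟩ := hconn.preconnected v t
    have hqn : ¬ q.Nil := Walk.not_nil_of_ne (Ne.symm ht)
    have hadj : T.Adj v (q.getVert 1) := Walk.adj_snd hqn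
    rw [deg]
    exact (Set.ncard_pos (Set.toFinite _)).mpr ⟨_, hadj⟩
  have hd2 : ∀ v : V, v ≠ a → v ≠ b → deg T v = 2 := by
    intro v hva hvb
    have hdd : ∀ u : V, deg T u = T.degree u := fun u => deg_eq_degree T u
    have hsum : ∑ u : V, T.degree u = 2 * T.edgeFinset.card :=
      SimpleGraph.sum_degrees_eq_twice_card_edges T
    have hcard : T.edgeFinset.card + 1 = Fintype.card V := hTree.card_edgeFinset
    set f : V → ℕ := fun u => if u = a ∨ u = b then 1 else 2 with hf
    have hfle : ∀ u ∈ Finset.univ, f u ≤ T.degree u := by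
      intro u _
      rw [← hdd]
      by_cases hu : u = a ∨ u = b
      · simpa [hf, hu] using hpos u
      · push_neg at hu
        have h1 : deg T u ≠ 1 := by
          intro h1
          have : u ∈ leaves T := h1
          rw [hleaves] at this
          rcases this with h | h
          · exact hu.1 h
          · exact hu.2 h
        have := hpos u
        simp only [hf]
        rw [if_neg (by push_neg; exact hu)]
        omega
    have hfsum : ∑ u : V, f u = 2 * (Fintype.card V - 1) := by
      have hsplit := Finset.sum_add_sum_compl ({a, b} : Finset V) f
      have h1 : ∑ u ∈ ({a, b} : Finset V), f u = 2 := by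
        rw [Finset.sum_pair hab]
        simp [hf]
      have h2 : ∑ u ∈ ({a, b} : Finset V)ᶜ, f u = 2 * (Fintype.card V - 2) := by
        have hconst : ∀ u ∈ ({a, b} : Finset V)ᶜ, f u = 2 := by
          intro u hu
          simp only [Finset.mem_compl, Finset.mem_insert, Finset.mem_singleton] at hu
          push_neg at hu
          simp [hf, hu.1, hu.2]
        rw [Finset.sum_congr rfl hconst, Finset.sum_const, Finset.card_compl,
          Finset.card_pair hab, smul_eq_mul, Nat.mul_comm]
      rw [← hsplit, h1, h2]
      omega
    have heq := (Finset.sum_eq_sum_iff_of_le hfle).mp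
      (by rw [hfsum, hsum]; omega) v (Finset.mem_univ v)
    rw [hdd, ← heq]
    simp [hf, hva, hvb]
  -- the path
  obtain ⟨q0⟩ := hconn.preconnected a b
  set pT : T.Walk a b := q0.bypass with hpTdef
  have hpT : pT.IsPath := q0.bypass_isPath
  have hnn : ¬ pT.Nil := Walk.not_nil_of_ne hab
  have hlen := Walk.not_nil_iff_lt_length.mp hnn
  -- support covers everything
  have hcov : ∀ w : V, w ∈ pT.support := by
    by_contra hcon
    push_neg at hcon
    obtain ⟨w, hw⟩ := hcon
    obtain ⟨q⟩ := hconn.preconnected w a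
    obtain ⟨z, s, hz, hs, hzs⟩ :=
      first_crossing (S := {x | x ∈ pT.support}) q (pT.start_mem_support) hw
    have hsub_adj : ∀ {x y : V}, pT.toSubgraph.Adj x y → T.Adj x y :=
      fun h => h.adj_sub
    by_cases hsa : s = a
    · subst hsa
      have h1 := aux_endpoint pT hpT hnn
      have hg1 : pT.getVert 1 ∈ pT.support :=
        Walk.mem_support_iff_exists_getVert.mpr ⟨1, rfl, by omega⟩
      have hadj1 : T.Adj s (pT.getVert 1) := by
        apply hsub_adj
        have : pT.getVert 1 ∈ pT.toSubgraph.neighborSet s := by rw [h1]; rfl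
        exact this
      have hne : pT.getVert 1 ≠ z := fun h => hz (h ▸ hg1)
      have hsubset : ({pT.getVert 1, z} : Set V) ⊆ T.neighborSet s := by
        rintro x (rfl | rfl)
        · exact hadj1
        · exact hzs.symm
      have := Set.ncard_le_ncard hsubset (Set.toFinite _)
      rw [Set.ncard_pair hne] at this
      rw [deg] at hda
      omega
    · by_cases hsb : s = b
      · subst hsb
        have hnn' : ¬ pT.reverse.Nil := Walk.not_nil_of_ne hab.symm
        have h1 := aux_endpoint pT.reverse hpT.reverse hnn'
        have hg1 : pT.reverse.getVert 1 ∈ pT.support := by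
          have : pT.reverse.getVert 1 ∈ pT.reverse.support :=
            Walk.mem_support_iff_exists_getVert.mpr ⟨1, rfl, by
              rw [Walk.length_reverse]; omega⟩
          rwa [Walk.support_reverse, List.mem_reverse] at this
        have hadj1 : T.Adj s (pT.reverse.getVert 1) := by
          apply hsub_adj
          rw [← Walk.toSubgraph_reverse]
          have : pT.reverse.getVert 1 ∈ pT.reverse.toSubgraph.neighborSet s := by
            rw [h1]; rfl
          exact this
        have hne : pT.reverse.getVert 1 ≠ z := fun h => hz (h ▸ hg1)
        have hsubset : ({pT.reverse.getVert 1, z} : Set V) ⊆ T.neighborSet s := by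
          rintro x (rfl | rfl)
          · exact hadj1
          · exact hzs.symm
        have := Set.ncard_le_ncard hsubset (Set.toFinite _)
        rw [Set.ncard_pair hne] at this
        rw [deg] at hdb
        omega
      · obtain ⟨s1, t1, hst, hs1, ht1, hset⟩ := aux_internal pT hpT hs hsa hsb
        have hm1 : s1 ∈ pT.toSubgraph.neighborSet s := by rw [hset]; exact Set.mem_insert _ _
        have hm2 : t1 ∈ pT.toSubgraph.neighborSet s := by
          rw [hset]; exact Set.mem_insert_of_mem _ rfl
        have ha1 : T.Adj s s1 := ((Subgraph.mem_neighborSet _ _ _).mp hm1).adj_sub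
        have ha2 : T.Adj s t1 := ((Subgraph.mem_neighborSet _ _ _).mp hm2).adj_sub
        have hne1 : s1 ≠ z := fun h => hz (h ▸ hs1)
        have hne2 : t1 ≠ z := fun h => hz (h ▸ ht1)
        have hsubset : ({s1, t1, z} : Set V) ⊆ T.neighborSet s := by
          rintro x (rfl | rfl | rfl)
          · exact ha1
          · exact ha2
          · exact hzs.symm
        have hc3 : ({s1, t1, z} : Set V).ncard = 3 := by
          rw [Set.ncard_insert_of_notMem (by simp [hst, hne1]) (Set.toFinite _),
            Set.ncard_pair hne2]
        have := Set.ncard_le_ncard hsubset (Set.toFinite _)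
        rw [hc3] at this
        have := hd2 s hsa hsb
        rw [deg] at this
        omega
  refine ⟨pT.mapLe hle, ?_⟩
  have hsupp : (pT.mapLe hle).support = pT.support := by
    rw [Walk.mapLe, Walk.support_map]
    exact List.map_id _
  exact (hpT.mapLe hle).isHamiltonian_of_mem (fun w => hsupp ▸ hcov w)

theorem loosely_tree_based_two_leaves [Fintype V] [DecidableEq V] (N : SimpleGraph V)
    (a b : V) (hab : a ≠ b) (hN : IsPhyloNetwork N {a, b}) :
    (LooselyTreeBased N {a, b} →
      ∀ x ∈ ({a, b} : Set V), ∀ y ∈ ({a, b} : Set V), N.Reachable x y) ∧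
    ((¬ ∃ T, IsBaseTree N T {a, b}) → ¬ LooselyTreeBased N {a, b}) ∧
    (LooselyTreeBased N {a, b} ↔ ∃ p : N.Walk a b, p.IsHamiltonian) := by
  refine ⟨fun _ x _ y _ => hN.1.preconnected x y, fun h => h, ?_, ?_⟩
  · rintro ⟨T, hT⟩
    exact tree_to_ham hab hT
  · rintro ⟨p, hp⟩
    exact ⟨p.toSubgraph.spanningCoe, ham_to_tree N a b hab p hp⟩
end

section
/- If N is a tree-based phylogenetic network, then the chromatic number of N is at most 4. -/
open SimpleGraph

variable {V : Type*}

section Aux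

open SimpleGraph Walk

private lemma edge_path_length_one {G : SimpleGraph V} {v w : V} (d : G.Walk v w)
    (hd : d.IsPath) (he : s(v, w) ∈ d.edges) : d.length = 1 := by
  cases d with
  | nil => simp at he
  | @cons _ x _ a t =>
    rw [Walk.edges_cons, List.mem_cons] at he
    rcases he with he | he
    · have hwx : w = x := by
        rw [Sym2.eq_iff] at he
        rcases he with ⟨_, h2⟩ | ⟨h1, _⟩
        · exact h2
        · exact absurd h1 a.ne
      subst hwx
      have ht : t.IsPath := (Walk.cons_isPath_iff a t).mp hd |>.1
      have : t = Walk.nil := by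
        have := SimpleGraph.Path.loop_eq (⟨t, ht⟩ : G.Path w w)
        simpa [SimpleGraph.Path.nil] using congrArg Subtype.val this
      subst this
      simp
    · exfalso
      have hv : v ∈ t.support := Walk.fst_mem_support_of_mem_edges t he
      exact ((Walk.cons_isPath_iff a t).mp hd).2 hv

private noncomputable def thePath {G : SimpleGraph V} (hG : G.IsTree) (r v : V) : G.Walk r v :=
  (hG.existsUnique_path r v).choose

private lemma thePath_isPath {G : SimpleGraph V} (hG : G.IsTree) (r v : V) :
    (thePath hG r v).IsPath := (hG.existsUnique_path r v).choose_spec.1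

private lemma thePath_unique {G : SimpleGraph V} (hG : G.IsTree) {r v : V} (q : G.Walk r v)
    (hq : q.IsPath) : q = thePath hG r v := (hG.existsUnique_path r v).choose_spec.2 q hq

private lemma tree_adj_length {G : SimpleGraph V} (hG : G.IsTree) (r : V) {v w : V}
    (h : G.Adj v w) :
    (thePath hG r w).length = (thePath hG r v).length + 1 ∨
      (thePath hG r v).length = (thePath hG r w).length + 1 := by
  classical
  set p := thePath hG r v with hp_def
  have hp : p.IsPath := thePath_isPath hG r v
  by_cases hw : w ∈ p.support
  · right
    have hq : (p.takeUntil w hw).IsPath := hp.takeUntil hw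
    have hq' : p.takeUntil w hw = thePath hG r w := thePath_unique hG _ hq
    have hd : (p.dropUntil w hw).IsPath := hp.dropUntil hw
    have hnc : ¬ (Walk.cons h (p.dropUntil w hw)).IsCycle := hG.IsAcyclic _
    rw [Walk.cons_isCycle_iff] at hnc
    push_neg at hnc
    have he : s(v, w) ∈ (p.dropUntil w hw).edges := hnc hd
    have he' : s(v, w) ∈ (p.dropUntil w hw).reverse.edges := by
      rw [Walk.edges_reverse, List.mem_reverse]; exact he
    have hlen1 : (p.dropUntil w hw).reverse.length = 1 :=
      edge_path_length_one _ ((Walk.isPath_reverse_iff _).mpr hd) he'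
    rw [Walk.length_reverse] at hlen1
    have hsplit := congrArg Walk.length (p.take_spec hw)
    rw [Walk.length_append, hlen1, hq'] at hsplit
    omega
  · left
    have hconcat : (p.concat h).IsPath := by
      rw [← Walk.isPath_reverse_iff, Walk.reverse_concat, Walk.cons_isPath_iff]
      refine ⟨(Walk.isPath_reverse_iff _).mpr hp, ?_⟩
      rw [Walk.support_reverse, List.mem_reverse]
      exact hw
    have := thePath_unique hG _ hconcat
    rw [← this, Walk.length_concat]

private lemma tree_two_coloring {G : SimpleGraph V} (hG : G.IsTree) :
    ∃ c : V → Bool, ∀ v w, G.Adj v w → c v ≠ c w := by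
  have : Nonempty V := hG.isConnected.nonempty
  obtain ⟨r⟩ := this
  refine ⟨fun v => decide ((thePath hG r v).length % 2 = 0), ?_⟩
  intro v w h
  rcases tree_adj_length hG r h with h1 | h1 <;>
    simp only [ne_eq, decide_eq_decide, h1] <;> omega

end Aux

theorem tree_based_four_colourable [Fintype V] (N : SimpleGraph V) (X : Set V)
    (hN : IsPhyloNetwork N X) (htb : TreeBasedConstr N X) :
    N.chromaticNumber ≤ 4 := by
  classical
  obtain ⟨T, ⟨hTN, hTtree, _⟩, hnew, hattach⟩ := htb
  -- the graph of "new" edges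
  set M : SimpleGraph V := N \ T with hM_def
  have hMadj : ∀ {v w : V}, M.Adj v w ↔ N.Adj v w ∧ ¬ T.Adj v w := by
    intro v w; rw [hM_def, sdiff_adj]
  -- neighbor set decomposition
  have hdecomp : ∀ v : V, N.neighborSet v = T.neighborSet v ∪ M.neighborSet v := by
    intro v
    ext u
    simp only [mem_neighborSet, Set.mem_union, hMadj]
    constructor
    · intro h
      by_cases hT : T.Adj v u
      · exact Or.inl hT
      · exact Or.inr ⟨h, hT⟩
    · rintro (h | ⟨h, _⟩)
      · exact hTN h
      · exact h
  -- unique M-neighbor at attachment points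
  have huniq : ∀ v : V, deg T v = 2 → ∃ u : V, M.neighborSet v = {u} := by
    intro v hv
    have hN3 : deg N v = 3 := hattach v hv
    have hdisj : Disjoint (T.neighborSet v) (M.neighborSet v) := by
      rw [Set.disjoint_left]
      intro u hu hu'
      exact ((hMadj.mp hu').2) hu
    have hcard : deg N v = deg T v + (M.neighborSet v).ncard := by
      rw [deg, hdecomp v, Set.ncard_union_eq hdisj (Set.toFinite _) (Set.toFinite _)]
      rfl
    have h1 : (M.neighborSet v).ncard = 1 := by omega
    exact Set.ncard_eq_one.mp h1
  -- tree coloring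
  obtain ⟨cT, hcT⟩ := tree_two_coloring hTtree
  -- linear-order tiebreak
  let e : V ≃ Fin (Fintype.card V) := Fintype.equivFin V
  -- coloring of new edges
  let cM : V → Bool := fun v =>
    if deg T v = 2 ∧ ∃ u, M.Adj v u ∧ deg T u = 2 ∧ e u < e v then false
    else if deg T v = 2 then true else false
  have hun : ∀ a, deg T a = 2 → ∀ x y, M.Adj a x → M.Adj a y → x = y := by
    intro a ha x y hx hy
    obtain ⟨u, hu⟩ := huniq a ha
    have hx' : x ∈ M.neighborSet a := hx
    have hy' : y ∈ M.neighborSet a := hy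
    rw [hu, Set.mem_singleton_iff] at hx' hy'
    rw [hx', hy']
  have cM_true : ∀ a, deg T a = 2 → (∀ x, M.Adj a x → ¬(deg T x = 2 ∧ e x < e a)) →
      cM a = true := by
    intro a ha hno
    have h1 : ¬(deg T a = 2 ∧ ∃ u, M.Adj a u ∧ deg T u = 2 ∧ e u < e a) := by
      rintro ⟨-, u, hu, h2, h3⟩; exact hno u hu ⟨h2, h3⟩
    simp only [cM, if_neg h1, if_pos ha]
  have cM_false_notA : ∀ a, ¬ deg T a = 2 → cM a = false := by
    intro a ha
    have h1 : ¬(deg T a = 2 ∧ ∃ u, M.Adj a u ∧ deg T u = 2 ∧ e u < e a) := fun h => ha h.1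
    simp only [cM, if_neg h1, if_neg ha]
  have cM_false_lt : ∀ a u, deg T a = 2 → M.Adj a u → deg T u = 2 → e u < e a →
      cM a = false := by
    intro a u ha hu h2 h3
    have h1 : deg T a = 2 ∧ ∃ u, M.Adj a u ∧ deg T u = 2 ∧ e u < e a := ⟨ha, u, hu, h2, h3⟩
    simp only [cM, if_pos h1]
  have hcM : ∀ v w, M.Adj v w → cM v ≠ cM w := by
    intro v w hvw
    have hne : v ≠ w := (hMadj.mp hvw).1.ne
    by_cases av : deg T v = 2 <;> by_cases aw : deg T w = 2
    · -- both attachment points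
      have hne' : e v ≠ e w := fun h => hne (e.injective h)
      rcases lt_or_gt_of_ne hne' with hlt | hlt
      · rw [cM_false_lt w v aw hvw.symm av hlt,
          cM_true v av (fun x hx hc => by
            rw [hun v av x w hx hvw] at hc
            exact absurd hc.2 (by omega))]
        decide
      · rw [cM_false_lt v w av hvw aw hlt,
          cM_true w aw (fun x hx hc => by
            rw [hun w aw x v hx hvw.symm] at hc
            exact absurd hc.2 (by omega))]
        decide
    · rw [cM_false_notA w aw,
        cM_true v av (fun x hx hc => by
          rw [hun v av x w hx hvw] at hc
          exact absurd hc.1 aw)]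
      decide
    · rw [cM_false_notA v av,
        cM_true w aw (fun x hx hc => by
          rw [hun w aw x v hx hvw.symm] at hc
          exact absurd hc.1 av)]
      decide
    · exact absurd (hnew v w (hMadj.mp hvw).1 (hMadj.mp hvw).2) (by tauto)
  -- combine
  let c : N.Coloring (Bool × Bool) := Coloring.mk (fun v => (cT v, cM v)) (by
    intro v w hvw
    by_cases hT : T.Adj v w
    · intro hcontra
      exact hcT v w hT (congrArg Prod.fst hcontra)
    · intro hcontra
      exact hcM v w (hMadj.mpr ⟨hvw, hT⟩) (congrArg Prod.snd hcontra))
  have hcol : N.Colorable (Fintype.card (Bool × Bool)) := c.colorable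
  have h4 : Fintype.card (Bool × Bool) = 4 := by simp
  rw [h4] at hcol
  calc N.chromaticNumber ≤ (4 : ℕ) := hcol.chromaticNumber_le
    _ = 4 := by norm_num
end

section
/- For every positive integer k there exists a loosely tree-based phylogenetic network N (a network possessing a spanning tree whose leaf set equals the leaf set of N) with chromatic number at least k. -/
open SimpleGraph

variable {V : Type*}

section AuxiliaryLemmas

lemma aux_pathGraph_walk_le {n : ℕ} (x y : Fin n) (hxy : (x : ℕ) + 1 = (y : ℕ))
    {a b : Fin n} (p : ((pathGraph n) \ fromEdgeSet {s(x, y)}).Walk a b)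
    (ha : (a : ℕ) ≤ (x : ℕ)) : (b : ℕ) ≤ (x : ℕ) := by
  induction p with
  | nil => exact ha
  | @cons u v w h _ ih =>
    apply ih
    rw [sdiff_adj, pathGraph_adj, fromEdgeSet_adj] at h
    obtain ⟨h1, h2⟩ := h
    rcases h1 with h1 | h1
    · rcases Nat.lt_or_ge (u : ℕ) (x : ℕ) with hlt | hge
      · omega
      · exfalso
        have hux : u = x := Fin.ext (by omega)
        have hvy : v = y := Fin.ext (by omega)
        exact h2 ⟨by rw [hux, hvy]; simp, fun he => by
          have := congrArg Fin.val he; omega⟩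
    · omega

lemma aux_pathGraph_isAcyclic (n : ℕ) : (pathGraph n).IsAcyclic := by
  rw [isAcyclic_iff_forall_adj_isBridge]
  intro v w hvw
  rw [isBridge_iff]
  rw [pathGraph_adj] at hvw
  rcases hvw with h | h
  · rintro ⟨p⟩
    have := aux_pathGraph_walk_le v w h p le_rfl
    omega
  · rintro ⟨p⟩
    rw [Sym2.eq_swap] at p
    have := aux_pathGraph_walk_le w v h p.reverse le_rfl
    omega

lemma aux_two_le_ncard {α : Type*} {S : Set α} (hS : S.Finite) {a b : α}
    (ha : a ∈ S) (hb : b ∈ S) (hab : a ≠ b) : 2 ≤ S.ncard := by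
  have h1 : ({a, b} : Set α).ncard = 2 := Set.ncard_pair hab
  have h2 : ({a, b} : Set α) ⊆ S := by simp [Set.insert_subset_iff, ha, hb]
  calc 2 = ({a, b} : Set α).ncard := h1.symm
    _ ≤ S.ncard := Set.ncard_le_ncard h2 hS

lemma aux_three_le_ncard {α : Type*} {S : Set α} (hS : S.Finite) {a b c : α}
    (ha : a ∈ S) (hb : b ∈ S) (hc : c ∈ S)
    (hab : a ≠ b) (hac : a ≠ c) (hbc : b ≠ c) : 3 ≤ S.ncard := by
  have h1 : ({a, b, c} : Set α).ncard = 3 := by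
    rw [Set.ncard_insert_of_notMem (by simp [hab, hac]), Set.ncard_pair hbc]
  have h2 : ({a, b, c} : Set α) ⊆ S := by simp [Set.insert_subset_iff, ha, hb, hc]
  calc 3 = ({a, b, c} : Set α).ncard := h1.symm
    _ ≤ S.ncard := Set.ncard_le_ncard h2 hS

/-- The network: clique on vertices `1..k+3` plus pendant leaves `0` and `k+4`. -/
def NG (k : ℕ) : SimpleGraph (Fin (k + 5)) where
  Adj i j := (i : ℕ) ≠ (j : ℕ) ∧
    ((1 ≤ (i : ℕ) ∧ (i : ℕ) ≤ k + 3 ∧ 1 ≤ (j : ℕ) ∧ (j : ℕ) ≤ k + 3) ∨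
      ((i : ℕ) = 0 ∧ (j : ℕ) = 1) ∨ ((i : ℕ) = 1 ∧ (j : ℕ) = 0) ∨
      ((i : ℕ) = k + 3 ∧ (j : ℕ) = k + 4) ∨ ((i : ℕ) = k + 4 ∧ (j : ℕ) = k + 3))
  symm := by constructor; intro i j ⟨h1, h2⟩; exact ⟨h1.symm, by tauto⟩
  loopless := by constructor; intro i ⟨h, _⟩; exact h rfl

lemma NG_adj {k : ℕ} {i j : Fin (k + 5)} : (NG k).Adj i j ↔ ((i : ℕ) ≠ (j : ℕ) ∧
    ((1 ≤ (i : ℕ) ∧ (i : ℕ) ≤ k + 3 ∧ 1 ≤ (j : ℕ) ∧ (j : ℕ) ≤ k + 3) ∨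
      ((i : ℕ) = 0 ∧ (j : ℕ) = 1) ∨ ((i : ℕ) = 1 ∧ (j : ℕ) = 0) ∨
      ((i : ℕ) = k + 3 ∧ (j : ℕ) = k + 4) ∨ ((i : ℕ) = k + 4 ∧ (j : ℕ) = k + 3))) :=
  Iff.rfl

lemma path_le_NG (k : ℕ) : pathGraph (k + 5) ≤ NG k := by
  intro i j h
  rw [pathGraph_adj] at h
  have hi := i.isLt
  have hj := j.isLt
  rw [NG_adj]
  omega

lemma deg_NG_left {k : ℕ} {i : Fin (k + 5)} (h : (i : ℕ) = 0) : deg (NG k) i = 1 := by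
  have hs : (NG k).neighborSet i = {(⟨1, by omega⟩ : Fin (k + 5))} := by
    ext j
    rw [mem_neighborSet, NG_adj]
    simp only [Set.mem_singleton_iff, Fin.ext_iff]
    omega
  rw [deg, hs, Set.ncard_singleton]

lemma deg_NG_right {k : ℕ} {i : Fin (k + 5)} (h : (i : ℕ) = k + 4) : deg (NG k) i = 1 := by
  have hs : (NG k).neighborSet i = {(⟨k + 3, by omega⟩ : Fin (k + 5))} := by
    ext j
    rw [mem_neighborSet, NG_adj]
    simp only [Set.mem_singleton_iff, Fin.ext_iff]
    omega
  rw [deg, hs, Set.ncard_singleton]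

lemma deg_NG_mid {k : ℕ} (hk : 1 ≤ k) {i : Fin (k + 5)}
    (h1 : 1 ≤ (i : ℕ)) (h2 : (i : ℕ) ≤ k + 3) : 3 ≤ deg (NG k) i := by
  have key : ∀ t : Fin (k + 5), 1 ≤ (t : ℕ) → (t : ℕ) ≤ k + 3 → (t : ℕ) ≠ (i : ℕ) →
      t ∈ (NG k).neighborSet i := by
    intro t ht1 ht2 ht3
    rw [mem_neighborSet, NG_adj]
    exact ⟨fun he => ht3 he.symm, Or.inl ⟨h1, h2, ht1, ht2⟩⟩
  obtain ⟨a, b, c, ha, hb, hc, hab, hac, hbc⟩ :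
      ∃ a b c : ℕ, (1 ≤ a ∧ a ≤ k + 3 ∧ a ≠ (i : ℕ)) ∧ (1 ≤ b ∧ b ≤ k + 3 ∧ b ≠ (i : ℕ)) ∧
        (1 ≤ c ∧ c ≤ k + 3 ∧ c ≠ (i : ℕ)) ∧ a ≠ b ∧ a ≠ c ∧ b ≠ c := by
    refine ⟨if (i : ℕ) = 1 then 2 else 1, if (i : ℕ) ≤ 2 then 3 else 2,
      if (i : ℕ) ≤ 3 then 4 else 3, ?_⟩
    split_ifs <;> omega
  exact aux_three_le_ncard (Set.toFinite _)
    (key ⟨a, by omega⟩ ha.1 ha.2.1 ha.2.2) (key ⟨b, by omega⟩ hb.1 hb.2.1 hb.2.2)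
    (key ⟨c, by omega⟩ hc.1 hc.2.1 hc.2.2)
    (by simp only [ne_eq, Fin.mk.injEq]; omega) (by simp only [ne_eq, Fin.mk.injEq]; omega)
    (by simp only [ne_eq, Fin.mk.injEq]; omega)

lemma deg_path_left {k : ℕ} {i : Fin (k + 5)} (h : (i : ℕ) = 0) :
    deg (pathGraph (k + 5)) i = 1 := by
  have hs : (pathGraph (k + 5)).neighborSet i = {(⟨1, by omega⟩ : Fin (k + 5))} := by
    ext j
    rw [mem_neighborSet, pathGraph_adj]
    simp only [Set.mem_singleton_iff, Fin.ext_iff]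
    omega
  rw [deg, hs, Set.ncard_singleton]

lemma deg_path_right {k : ℕ} {i : Fin (k + 5)} (h : (i : ℕ) = k + 4) :
    deg (pathGraph (k + 5)) i = 1 := by
  have hs : (pathGraph (k + 5)).neighborSet i = {(⟨k + 3, by omega⟩ : Fin (k + 5))} := by
    ext j
    rw [mem_neighborSet, pathGraph_adj]
    simp only [Set.mem_singleton_iff, Fin.ext_iff]
    omega
  rw [deg, hs, Set.ncard_singleton]

lemma deg_path_mid {k : ℕ} {i : Fin (k + 5)}
    (h1 : 1 ≤ (i : ℕ)) (h2 : (i : ℕ) ≤ k + 3) : 2 ≤ deg (pathGraph (k + 5)) i := by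
  have ha : (⟨(i : ℕ) - 1, by omega⟩ : Fin (k + 5)) ∈ (pathGraph (k + 5)).neighborSet i := by
    rw [mem_neighborSet, pathGraph_adj]; right; simp; omega
  have hb : (⟨(i : ℕ) + 1, by omega⟩ : Fin (k + 5)) ∈ (pathGraph (k + 5)).neighborSet i := by
    rw [mem_neighborSet, pathGraph_adj]; left; simp
  exact aux_two_le_ncard (Set.toFinite _) ha hb (by simp only [ne_eq, Fin.mk.injEq]; omega)

end AuxiliaryLemmas

theorem loosely_tree_based_unbounded_chromatic (k : ℕ) (hk : 0 < k) :
    ∃ (W : Type) (_ : Fintype W) (N : SimpleGraph W) (X : Set W),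
      IsPhyloNetwork N X ∧ LooselyTreeBased N X ∧ (k : ℕ∞) ≤ N.chromaticNumber := by
  have hk1 : 1 ≤ k := hk
  refine ⟨Fin (k + 5), inferInstance, NG k,
    {v : Fin (k + 5) | (v : ℕ) = 0 ∨ (v : ℕ) = k + 4}, ⟨?_, ?_, ?_⟩,
    ⟨pathGraph (k + 5), path_le_NG k, ⟨pathGraph_connected (k + 4),
      aux_pathGraph_isAcyclic (k + 5)⟩, ?_⟩, ?_⟩
  · exact (pathGraph_connected (k + 4)).mono (path_le_NG k)
  · intro v
    have hv := v.isLt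
    by_cases h0 : (v : ℕ) = 0
    · rw [deg_NG_left h0]; omega
    by_cases h4 : (v : ℕ) = k + 4
    · rw [deg_NG_right h4]; omega
    have := deg_NG_mid hk1 (i := v) (by omega) (by omega)
    omega
  · ext i
    have hi := i.isLt
    simp only [leaves, Set.mem_setOf_eq]
    constructor
    · intro hdeg
      by_contra hno
      push_neg at hno
      have := deg_NG_mid hk1 (i := i) (by omega) (by omega)
      omega
    · rintro (h | h)
      · exact deg_NG_left h
      · exact deg_NG_right h
  · ext i
    have hi := i.isLt
    simp only [leaves, Set.mem_setOf_eq]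
    constructor
    · intro hdeg
      by_contra hno
      push_neg at hno
      have := deg_path_mid (i := i) (by omega) (by omega)
      omega
    · rintro (h | h)
      · exact deg_path_left h
      · exact deg_path_right h
  · have f : (⊤ : SimpleGraph (Fin k)) ↪g NG k := by
      refine ⟨⟨fun a => ⟨(a : ℕ) + 1, by omega⟩, ?_⟩, ?_⟩
      · exact show Function.Injective _ from fun a b h => Fin.ext (by simpa [Fin.ext_iff] using h)
      · intro a b
        have ha := a.isLt
        have hb := b.isLt
        simp only [top_adj, NG_adj, ne_eq, Function.Embedding.coeFn_mk, Fin.ext_iff]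
        constructor
        · rintro ⟨h, -⟩
          omega
        · intro h
          exact ⟨by omega, Or.inl ⟨by omega, by omega, by omega, by omega⟩⟩
    calc (k : ℕ∞) = (⊤ : SimpleGraph (Fin k)).chromaticNumber := by
            rw [chromaticNumber_top, Fintype.card_fin]
      _ ≤ (NG k).chromaticNumber := chromaticNumber_mono_of_hom f.toHom
end

section
/- Let N be a simple strictly tree-based phylogenetic network that is not a tree, with strict base tree T (a spanning tree with the same leaf set as N containing all edges incident to vertices of degree at least 4). Then there exists a vertex v of degree 3 in N that is incident to a pendant edge and to an edge of N not contained in T. -/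
open SimpleGraph

variable {V : Type*}

/-- The leaf set of a subgraph: vertices of the subgraph having exactly one
neighbour in the subgraph. -/
def subLeaves {N : SimpleGraph V} (H : N.Subgraph) : Set V :=
  {v | v ∈ H.verts ∧ (H.neighborSet v).ncard = 1}

/-- A simple network: every cut-edge (bridge) is a pendant edge. -/
def IsSimpleNetwork (N : SimpleGraph V) : Prop :=
  ∀ v w, N.Adj v w → N.IsBridge s(v, w) → deg N v = 1 ∨ deg N w = 1

private lemma attach_deg [Fintype V] {N T : SimpleGraph V} {X : Set V}
    (hN : IsPhyloNetwork N X) (hT : IsBaseTree N T X)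
    (hstrict : ∀ u w, N.Adj u w → 4 ≤ deg N u → T.Adj u w)
    {v w : V} (h : N.Adj v w) (ht : ¬ T.Adj v w) :
    deg N v = 3 ∧ deg T v = 2 := by
  obtain ⟨hle, htree, hlT⟩ := hT
  obtain ⟨-, hdeg2, hlN⟩ := hN
  have hTv1 : 1 ≤ deg T v := by
    rw [Nat.one_le_iff_ne_zero]
    intro h0
    have hemp : T.neighborSet v = ∅ := by
      rw [← Set.not_nonempty_iff_eq_empty]
      intro hne
      have h2 := (Set.ncard_pos (Set.toFinite _)).mpr hne
      unfold deg at h0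
      omega
    obtain ⟨W⟩ := htree.isConnected v w
    cases W with
    | nil => exact h.ne rfl
    | cons hadj q =>
        have : _ ∈ T.neighborSet v := hadj
        rw [hemp] at this
        exact this
  have hsub : T.neighborSet v ⊆ N.neighborSet v \ {w} := by
    intro u hu
    refine ⟨hle hu, ?_⟩
    intro heq
    exact ht (by rwa [Set.mem_singleton_iff.mp heq] at hu)
  have hwmem : w ∈ N.neighborSet v := h
  have h1 : deg T v ≤ deg N v - 1 := by
    calc deg T v ≤ (N.neighborSet v \ {w}).ncard :=
          Set.ncard_le_ncard hsub (Set.toFinite _)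
      _ = deg N v - 1 := Set.ncard_diff_singleton_of_mem hwmem
  have hNv1 : 1 ≤ deg N v := (Set.ncard_pos (Set.toFinite _)).mpr ⟨w, hwmem⟩
  have hNv3 : deg N v ≤ 3 := by
    by_contra hc
    exact ht (hstrict v w h (by omega))
  have hNv : deg N v = 3 := by have := hdeg2 v; omega
  have hTvne1 : deg T v ≠ 1 := by
    intro h1'
    have hv : v ∈ leaves T := h1'
    rw [hlT, ← hlN] at hv
    have : deg N v = 1 := hv
    omega
  exact ⟨hNv, by omega⟩

theorem strict_base_tree_degree_three_vertex [Fintype V] (N T : SimpleGraph V)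
    (X : Set V) (hN : IsPhyloNetwork N X) (hs : IsSimpleNetwork N) (hnt : ¬ N.IsTree)
    (hT : IsBaseTree N T X)
    (hstrict : ∀ u w, N.Adj u w → 4 ≤ deg N u → T.Adj u w) :
    ∃ v, deg N v = 3 ∧ (∃ u, N.Adj v u ∧ deg N u = 1) ∧
      ∃ w, N.Adj v w ∧ ¬ T.Adj v w := by
  classical
  have hle : T ≤ N := hT.1
  have htree : T.IsTree := hT.2.1
  -- there is a non-tree edge
  have hedge : ∃ v w, N.Adj v w ∧ ¬ T.Adj v w := by
    by_contra hc
    push_neg at hc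
    have : N = T := le_antisymm (fun v w h => hc v w h) hle
    exact hnt (this ▸ htree)
  obtain ⟨v₀, w₀, hvw₀, htvw₀⟩ := hedge
  set A : Set V := {u | ∃ z, N.Adj u z ∧ ¬ T.Adj u z} with hA
  have hv₀A : v₀ ∈ A := ⟨w₀, hvw₀, htvw₀⟩
  have hw₀A : w₀ ∈ A := ⟨v₀, hvw₀.symm, fun hh => htvw₀ hh.symm⟩
  obtain ⟨m, hmA, hmax⟩ :=
    Set.exists_max_image A (fun u => T.dist v₀ u) (Set.toFinite _) ⟨v₀, hv₀A⟩
  set r := v₀ with hr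
  set d := T.dist r m with hd
  have hd1 : 1 ≤ d := by
    have hmx := hmax w₀ hw₀A
    have hw0 : T.dist r w₀ ≠ 0 := by
      rw [SimpleGraph.dist_ne_zero_iff_ne_and_reachable]
      exact ⟨hvw₀.ne, htree.isConnected r w₀⟩
    omega
  have hmr : m ≠ r := by
    intro h
    rw [h] at hd
    simp [SimpleGraph.dist_self] at hd
    omega
  obtain ⟨z, hmz, htmz⟩ := hmA
  obtain ⟨hNm3, hTm2⟩ := attach_deg hN hT hstrict hmz htmz
  -- find the parent p of m
  obtain ⟨W, hWlen⟩ := (htree.isConnected m r).exists_walk_length_eq_dist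
  obtain ⟨p, hadj, q, hWq⟩ := W.exists_eq_cons_of_ne hmr
  have hqlen : q.length + 1 = d := by
    rw [hWq] at hWlen
    simp only [SimpleGraph.Walk.length_cons] at hWlen
    rw [hd, SimpleGraph.dist_comm]
    omega
  have hdrp : T.dist r p = d - 1 := by
    have h1 : T.dist r p ≤ d - 1 := by
      have := SimpleGraph.dist_le q
      rw [SimpleGraph.dist_comm] at this
      omega
    have h2 : d ≤ T.dist r p + 1 := by
      calc d = T.dist r m := hd
        _ ≤ T.dist r p + T.dist p m := htree.isConnected.dist_triangle
        _ = T.dist r p + 1 := by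
            rw [SimpleGraph.dist_eq_one_iff_adj.mpr hadj.symm]
    omega
  -- find the other neighbour c of m
  obtain ⟨x, y, hxy, hset⟩ := Set.ncard_eq_two.mp hTm2
  have hpmem : p ∈ T.neighborSet m := hadj
  obtain ⟨c, hmc, hcp⟩ : ∃ c, T.Adj m c ∧ c ≠ p := by
    rw [hset] at hpmem
    rcases hpmem with hpx | hpy
    · refine ⟨y, ?_, by rw [← hpx] at hxy; exact fun hh => hxy hh.symm⟩
      have : y ∈ T.neighborSet m := by rw [hset]; right; rfl
      exact this
    · refine ⟨x, ?_, by rw [← hpy] at hxy; exact hxy⟩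
      have : x ∈ T.neighborSet m := by rw [hset]; left; rfl
      exact this
  have hpm : p ≠ m := hadj.ne'
  have hepm : s(p, m) ≠ s(m, c) := by
    intro hcontra
    rw [Sym2.eq_iff] at hcontra
    rcases hcontra with ⟨h1, -⟩ | ⟨h1, -⟩
    · exact hpm h1
    · exact hcp h1.symm
  set T' := T.deleteEdges {s(m, c)} with hT'
  have hT'sdiff : T' = T \ SimpleGraph.fromEdgeSet {s(m, c)} := rfl
  -- the edge m-c is a bridge of T
  have hTbridge : ¬ T'.Reachable m c := by
    have hb := (SimpleGraph.isAcyclic_iff_forall_adj_isBridge.mp htree.IsAcyclic) hmc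
    rw [SimpleGraph.isBridge_iff] at hb
    rw [hT'sdiff]
    exact hb
  -- r is on m's side of this bridge
  have hrm : T'.Reachable r m := by
    obtain ⟨Q, hQ⟩ := (htree.isConnected r p).exists_walk_length_eq_dist
    have hQe : s(m, c) ∉ Q.edges := by
      intro hmem
      have hmsup : m ∈ Q.support := Q.fst_mem_support_of_mem_edges hmem
      have h1 := SimpleGraph.dist_le (Q.takeUntil m hmsup)
      have h3 : (Q.takeUntil m hmsup).length + (Q.dropUntil m hmsup).length = Q.length := by
        rw [← SimpleGraph.Walk.length_append, Q.take_spec hmsup]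
      omega
    have hQ' : T'.Reachable r p := ⟨Q.toDeleteEdge _ hQe⟩
    have hpm' : T'.Adj p m := by
      rw [hT'sdiff, SimpleGraph.sdiff_adj]
      refine ⟨hadj.symm, ?_⟩
      rw [SimpleGraph.fromEdgeSet_adj]
      rintro ⟨h1, -⟩
      exact hepm (Set.mem_singleton_iff.mp h1)
    exact hQ'.trans ⟨hpm'.toWalk⟩
  set S : Set V := {u | T'.Reachable c u} with hS
  have hcS : c ∈ S := SimpleGraph.Reachable.refl c
  have hmS : m ∉ S := fun hh => hTbridge hh.symm
  have hrS : r ∉ S := fun hh => hTbridge (hh.trans hrm).symm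
  -- every vertex on c's side is strictly deeper than m
  have hdepth : ∀ u ∈ S, d + 1 ≤ T.dist r u := by
    intro u huS
    obtain ⟨W', hW'⟩ := (htree.isConnected r u).exists_walk_length_eq_dist
    have hW'e : s(m, c) ∈ W'.edges := by
      by_contra hne
      have : T'.Reachable r u := ⟨W'.toDeleteEdge _ hne⟩
      exact hrS (huS.trans this.symm)
    have hmsup : m ∈ W'.support := W'.fst_mem_support_of_mem_edges hW'e
    have hmneu : m ≠ u := fun h => hmS (h ▸ huS)
    have h1 := SimpleGraph.dist_le (W'.takeUntil m hmsup)
    have h2 := SimpleGraph.dist_le (W'.dropUntil m hmsup)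
    have h3 : (W'.takeUntil m hmsup).length + (W'.dropUntil m hmsup).length = W'.length := by
      rw [← SimpleGraph.Walk.length_append, W'.take_spec hmsup]
    have h4 : T.dist m u ≠ 0 := by
      rw [SimpleGraph.dist_ne_zero_iff_ne_and_reachable]
      exact ⟨hmneu, htree.isConnected m u⟩
    omega
  -- the edge m-c is a bridge of N
  have hNmc : N.Adj m c := hle hmc
  have hNbridge : N.IsBridge s(m, c) := by
    rw [SimpleGraph.isBridge_iff]
    refine fun (hreach : (N \ SimpleGraph.fromEdgeSet {s(m, c)}).Reachable m c) => ?_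
    obtain ⟨R⟩ := hreach.symm
    obtain ⟨dart, hdart, haS, hbS⟩ := R.exists_boundary_dart S hcS hmS
    have hadjd := dart.adj
    rw [SimpleGraph.sdiff_adj] at hadjd
    obtain ⟨hNab, hnfe⟩ := hadjd
    have hene : s(dart.fst, dart.snd) ≠ s(m, c) := by
      intro hcontra
      exact hnfe ((SimpleGraph.fromEdgeSet_adj _).mpr ⟨by rw [hcontra]; rfl, hNab.ne⟩)
    by_cases hTab : T.Adj dart.fst dart.snd
    · have hT'ab : T'.Adj dart.fst dart.snd := by
        rw [hT'sdiff, SimpleGraph.sdiff_adj]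
        refine ⟨hTab, ?_⟩
        rw [SimpleGraph.fromEdgeSet_adj]
        rintro ⟨h1, -⟩
        exact hene (Set.mem_singleton_iff.mp h1)
      exact hbS (haS.trans ⟨hT'ab.toWalk⟩)
    · have haA : dart.fst ∈ A := ⟨dart.snd, hNab, hTab⟩
      have hmx := hmax dart.fst haA
      have hdp := hdepth dart.fst haS
      omega
  -- conclude using simplicity
  rcases hs m c hNmc hNbridge with h1 | h1
  · omega
  · exact ⟨m, hNm3, ⟨c, hNmc, h1⟩, ⟨z, hmz, htmz⟩⟩
end
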